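/- Let V, f₁, f₂, c, Φ ∈ M_n(ℂ) be Hermitian with f₁ positive definite, f₂ positive semidefinite, −V positive semidefinite, and Φ negative semidefinite. Let λ₀ > 0 satisfy √λ₀ · √(λ_min(f₁)) > λ_max(c), where λ_min and λ_max denote the smallest and largest eigenvalues. Then the Hermitian matrix λ₀ f₁ + λ₀² f₂ − V is positive definite and √(λ₀ f₁ + λ₀² f₂ − V) − c − Φ is positive definite. -/

import Mathlib

open Matrix
open scoped ComplexOrder

noncomputable section

/-- `Matrix.PosSemidef.sqrt` was removed from Mathlib; restored here with its old definition. -/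
def Matrix.PosSemidef.sqrt {n : Type*} [Fintype n] [DecidableEq n] {𝕜 : Type*} [RCLike 𝕜]
    {A : Matrix n n 𝕜} (hA : A.PosSemidef) : Matrix n n 𝕜 :=
  hA.1.eigenvectorUnitary.1 * diagonal ((↑) ∘ (Real.sqrt ·) ∘ hA.1.eigenvalues) *
    (star hA.1.eigenvectorUnitary : Matrix n n 𝕜)

/-! In the Loewner order, `λ_min(f₁) • 1 ≤ f₁` and `c ≤ λ_max(c) • 1`. The remaining summands being
positive semidefinite, `M := λ₀ f₁ + λ₀² f₂ − V ≥ λ₀ λ_min(f₁) • 1`; the square root is computed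
eigenvalue by eigenvalue, so `√M ≥ √(λ₀ λ_min(f₁)) • 1`. Hence
`√M − c − Φ ≥ (√λ₀ √λ_min(f₁) − λ_max(c)) • 1`, a positive multiple of the identity. -/

open scoped MatrixOrder

namespace Matrix

variable {n 𝕜 : Type*} [RCLike 𝕜] [Fintype n] [DecidableEq n] {A : Matrix n n 𝕜}

theorem PosSemidef.sqrt_eq_cfc (hA : A.PosSemidef) : hA.sqrt = cfc Real.sqrt A := by
  rw [hA.1.cfc_eq]; rfl

theorem IsHermitian.algebraMap_iInf_eigenvalues_le (hA : A.IsHermitian) :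
    algebraMap ℝ _ (⨅ i, hA.eigenvalues i) ≤ A := by
  rw [algebraMap_le_iff_le_spectrum hA.isSelfAdjoint, hA.spectrum_real_eq_range_eigenvalues]
  rintro _ ⟨i, rfl⟩
  exact ciInf_le (Finite.bddBelow_range _) i

theorem IsHermitian.le_algebraMap_iSup_eigenvalues (hA : A.IsHermitian) :
    A ≤ algebraMap ℝ _ (⨆ i, hA.eigenvalues i) := by
  rw [le_algebraMap_iff_spectrum_le hA.isSelfAdjoint, hA.spectrum_real_eq_range_eigenvalues]
  rintro _ ⟨i, rfl⟩
  exact le_ciSup (Finite.bddAbove_range _) i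

theorem PosSemidef.algebraMap_sqrt_le_sqrt (hA : A.PosSemidef) {r : ℝ}
    (hr : algebraMap ℝ _ r ≤ A) : algebraMap ℝ _ √r ≤ hA.sqrt := by
  rw [algebraMap_le_iff_le_spectrum hA.1.isSelfAdjoint] at hr
  rw [hA.sqrt_eq_cfc, algebraMap_le_cfc_iff _ _ _ (by fun_prop) hA.1.isSelfAdjoint]
  exact fun x hx => Real.sqrt_le_sqrt (hr x hx)

theorem PosDef.of_algebraMap_le {r : ℝ} (hr : 0 < r) (h : algebraMap ℝ _ r ≤ A) : A.PosDef := by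
  have hdiff : (A - algebraMap ℝ _ r).PosSemidef := le_iff.mp h
  rw [← sub_add_cancel A (algebraMap ℝ _ r)]
  rw [Algebra.algebraMap_eq_smul_one] at hdiff ⊢
  exact PosDef.posSemidef_add hdiff (PosDef.one.smul hr)

end Matrix

theorem bottom_shelf_matrix_posDef_general {n : ℕ}
    (V f₁ f₂ c Φ : Matrix (Fin n) (Fin n) ℂ)
    (hc : c.IsHermitian)
    (hf₁pos : f₁.PosDef) (hf₂pos : f₂.PosSemidef)
    (hVneg : (-V).PosSemidef) (hΦneg : (-Φ).PosSemidef)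
    (lam₀ : ℝ) (hlam₀ : 0 < lam₀)
    (hgap : Real.sqrt lam₀ * Real.sqrt (⨅ i, hf₁pos.1.eigenvalues i)
      > ⨆ i, hc.eigenvalues i) :
    ((lam₀ : ℂ) • f₁ + (lam₀ : ℂ) ^ 2 • f₂ - V).PosDef ∧
    ∀ hM : ((lam₀ : ℂ) • f₁ + (lam₀ : ℂ) ^ 2 • f₂ - V).PosSemidef,
      (hM.sqrt - c - Φ).PosDef := by
  set μ := ⨅ i, hf₁pos.1.eigenvalues i
  have hrest : ((lam₀ : ℂ) ^ 2 • f₂ - V).PosSemidef := by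
    rw [sub_eq_add_neg, ← Complex.ofReal_pow]
    exact (hf₂pos.smul (sq_nonneg lam₀)).add hVneg
  have hsplit : (lam₀ : ℂ) • f₁ + (lam₀ : ℂ) ^ 2 • f₂ - V
      = lam₀ • f₁ + ((lam₀ : ℂ) ^ 2 • f₂ - V) := by
    rw [add_sub_assoc, Complex.coe_smul]
  refine ⟨hsplit ▸ (hf₁pos.smul hlam₀).add_posSemidef hrest, fun hM => ?_⟩
  have hM_lb : algebraMap ℝ _ (lam₀ * μ) ≤ (lam₀ : ℂ) • f₁ + (lam₀ : ℂ) ^ 2 • f₂ - V :=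
    calc algebraMap ℝ _ (lam₀ * μ) = lam₀ • algebraMap ℝ (Matrix (Fin n) (Fin n) ℂ) μ := by
          rw [map_mul, Algebra.algebraMap_eq_smul_one lam₀, smul_mul_assoc, one_mul]
      _ ≤ lam₀ • f₁ :=
          smul_le_smul_of_nonneg_left hf₁pos.1.algebraMap_iInf_eigenvalues_le hlam₀.le
      _ ≤ _ := hsplit ▸ le_add_of_nonneg_right (nonneg_iff_posSemidef.mpr hrest)
  refine PosDef.of_algebraMap_le (r := √(lam₀ * μ) - ⨆ i, hc.eigenvalues i)
    (by rw [Real.sqrt_mul hlam₀.le]; linarith) ?_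
  calc algebraMap ℝ _ (√(lam₀ * μ) - ⨆ i, hc.eigenvalues i)
      = algebraMap ℝ _ √(lam₀ * μ) - algebraMap ℝ _ (⨆ i, hc.eigenvalues i) := map_sub _ _ _
    _ ≤ hM.sqrt - c :=
        sub_le_sub (hM.algebraMap_sqrt_le_sqrt hM_lb) hc.le_algebraMap_iSup_eigenvalues
    _ ≤ hM.sqrt - c - Φ := (le_sub_self_iff _).mpr (neg_nonneg.mp (nonneg_iff_posSemidef.mpr hΦneg))

/-- for λ₀ > 0 with `√λ₀ √(λ_min(f₁)) > λ_max(c)`, the matrix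
`λ₀ f₁ + λ₀² f₂ − V` is positive definite and
`√(λ₀ f₁ + λ₀² f₂ − V) − c − Φ` is positive definite. -/
theorem bottom_shelf_matrix_posDef {n : ℕ} (hn : 0 < n)
    (V f₁ f₂ c Φ : Matrix (Fin n) (Fin n) ℂ)
    (hV : V.IsHermitian) (hf₁ : f₁.IsHermitian) (hf₂ : f₂.IsHermitian)
    (hc : c.IsHermitian) (hΦ : Φ.IsHermitian)
    (hf₁pos : f₁.PosDef) (hf₂pos : f₂.PosSemidef)
    (hVneg : (-V).PosSemidef) (hΦneg : (-Φ).PosSemidef)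
    (lam₀ : ℝ) (hlam₀ : 0 < lam₀)
    (hgap : Real.sqrt lam₀ * Real.sqrt (⨅ i, hf₁pos.1.eigenvalues i)
      > ⨆ i, hc.eigenvalues i) :
    ((lam₀ : ℂ) • f₁ + (lam₀ : ℂ) ^ 2 • f₂ - V).PosDef ∧
    ∀ hM : ((lam₀ : ℂ) • f₁ + (lam₀ : ℂ) ^ 2 • f₂ - V).PosSemidef,
      (hM.sqrt - c - Φ).PosDef :=
  bottom_shelf_matrix_posDef_general V f₁ f₂ c Φ hc hf₁pos hf₂pos hVneg hΦneg lam₀ hlam₀ hgap
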